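/- arXiv:1302.1978 — 2 statements merged into one kernel-verified Lean document; each statement's English description precedes it below -/
import Mathlib

section
/- (Minty) Let H be a real Hilbert space and A : H ⇉ H a monotone operator. Then A is maximally monotone if and only if ran(A + Id) = H. -/
/-!
For monotone `A` the map `x + x* ↦ x - x*` is nonexpansive on `ran (A + Id)`. Given `z`, a
one-point Kirszbraun extension yields `u` with `‖u - (x - x*)‖ ≤ ‖z - (x + x*)‖` for every
`(x, x*) ∈ A`; expanding the squares, this says that `((z + u) / 2, (z - u) / 2)` is monotonically
related to `A`, so maximality puts it in `A`, and its coordinates sum to `z`.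

The extension (`u` with `‖u - y i‖ ≤ ‖z - x i‖` whenever `‖y i - y j‖ ≤ ‖x i - x j‖`) is, for
finitely many points, a minimax argument: with `r i = ‖z - x i‖²`, maximize
over the simplex of weights `w` the value at the barycenter `u = ∑ w i • y i` of the Lagrangian
`∑ w i (‖u - y i‖² - r i)`. Nonexpansiveness makes this value nonpositive, and first-order
optimality in `w` bounds every `‖u - y i‖² - r i` by it. Infinitely many points are handled by
intersecting the directed family of finite intersections of the balls.

Conversely, if `ran (A + Id) = H`, a point monotonically related to `A` has the same sum as some
point of `A`, and monotonicity forces the two to coincide.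
-/

noncomputable section
open scoped RealInnerProductSpace

variable {H : Type*} [NormedAddCommGroup H] [InnerProductSpace ℝ H] [CompleteSpace H]

/-- A set-valued operator `A : H ⇉ H`, given by its graph, is monotone. -/
def MonotoneGraph (A : Set (H × H)) : Prop :=
  ∀ a ∈ A, ∀ b ∈ A, (0 : ℝ) ≤ ⟪a.1 - b.1, a.2 - b.2⟫

/-- Maximal monotonicity: monotone with no proper monotone extension. -/
def MaximallyMonotoneGraph (A : Set (H × H)) : Prop :=
  MonotoneGraph A ∧ ∀ p : H × H, (∀ b ∈ A, (0 : ℝ) ≤ ⟪p.1 - b.1, p.2 - b.2⟫) → p ∈ A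

section Barycenter

variable {E : Type*} [NormedAddCommGroup E] [InnerProductSpace ℝ E] {ι : Type*} [Fintype ι]
  {w : ι → ℝ}

theorem sum_mul_norm_sub_sq_eq_add (hw : ∑ i, w i = 1) (x : ι → E) (u : E) :
    ∑ i, w i * ‖u - x i‖ ^ 2
      = ∑ i, w i * ‖∑ j, w j • x j - x i‖ ^ 2 + ‖u - ∑ j, w j • x j‖ ^ 2 := by
  set c := ∑ j, w j • x j
  have hc : ∑ i, w i • (c - x i) = 0 := by
    simp only [smul_sub, Finset.sum_sub_distrib, ← Finset.sum_smul, hw, one_smul, c, sub_self]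
  calc ∑ i, w i * ‖u - x i‖ ^ 2
      = ∑ i, w i * (‖u - c‖ ^ 2 + 2 * ⟪u - c, c - x i⟫ + ‖c - x i‖ ^ 2) := by
        simp only [← norm_add_sq_real, sub_add_sub_cancel]
    _ = (∑ i, w i) * ‖u - c‖ ^ 2 + 2 * ⟪u - c, ∑ i, w i • (c - x i)⟫
          + ∑ i, w i * ‖c - x i‖ ^ 2 := by
        simp only [inner_sum, real_inner_smul_right, Finset.mul_sum, Finset.sum_mul,
          ← Finset.sum_add_distrib]
        exact Finset.sum_congr rfl fun i _ ↦ by ring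
    _ = ∑ i, w i * ‖c - x i‖ ^ 2 + ‖u - c‖ ^ 2 := by
        rw [hw, hc, inner_zero_right]; ring

theorem sum_sum_mul_norm_sub_sq (hw : ∑ i, w i = 1) (x : ι → E) :
    ∑ i, ∑ j, w i * w j * ‖x i - x j‖ ^ 2 = 2 * ∑ i, w i * ‖∑ j, w j • x j - x i‖ ^ 2 := by
  set V := ∑ i, w i * ‖∑ j, w j • x j - x i‖ ^ 2
  calc ∑ i, ∑ j, w i * w j * ‖x i - x j‖ ^ 2
      = ∑ i, w i * (V + ‖∑ j, w j • x j - x i‖ ^ 2) := by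
        refine Finset.sum_congr rfl fun i _ ↦ ?_
        simp only [mul_assoc, ← Finset.mul_sum]
        rw [sum_mul_norm_sub_sq_eq_add hw x (x i), norm_sub_rev (x i)]
    _ = 2 * V := by
        rw [Finset.sum_congr rfl fun i _ ↦ mul_add (w i) _ _, Finset.sum_add_distrib,
          ← Finset.sum_mul, hw]
        ring

theorem sum_mul_norm_sum_smul_sub_sq_le {x y : ι → E}
    (hxy : ∀ i j, ‖y i - y j‖ ≤ ‖x i - x j‖) (hw₀ : ∀ i, 0 ≤ w i) (hw : ∑ i, w i = 1) (z : E) :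
    ∑ i, w i * ‖∑ j, w j • y j - y i‖ ^ 2 ≤ ∑ i, w i * ‖z - x i‖ ^ 2 := by
  have hsum : ∑ i, ∑ j, w i * w j * ‖y i - y j‖ ^ 2 ≤ ∑ i, ∑ j, w i * w j * ‖x i - x j‖ ^ 2 :=
    Finset.sum_le_sum fun i _ ↦ Finset.sum_le_sum fun j _ ↦
      mul_le_mul_of_nonneg_left (pow_le_pow_left₀ (norm_nonneg _) (hxy i j) 2)
        (mul_nonneg (hw₀ i) (hw₀ j))
  rw [sum_sum_mul_norm_sub_sq hw, sum_sum_mul_norm_sub_sq hw] at hsum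
  rw [sum_mul_norm_sub_sq_eq_add hw x z]
  nlinarith [sq_nonneg ‖z - ∑ j, w j • x j‖]

end Barycenter

section BallLagrangian

variable {E : Type*} [NormedAddCommGroup E] {ι : Type*} [Fintype ι]
  (y : ι → E) (r : ι → ℝ)

/-- The Lagrangian of minimizing `max i, ‖u - y i‖ ^ 2 - r i` over `u`, with multipliers `w`. -/
def ballLagrangian (w : ι → ℝ) (u : E) : ℝ :=
  ∑ i, w i * (‖u - y i‖ ^ 2 - r i)

theorem ballLagrangian_eq_add [InnerProductSpace ℝ E] {w : ι → ℝ} (hw : ∑ i, w i = 1) (u : E) :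
    ballLagrangian y r w u
      = ballLagrangian y r w (∑ k, w k • y k) + ‖u - ∑ k, w k • y k‖ ^ 2 := by
  simp only [ballLagrangian, mul_sub, Finset.sum_sub_distrib]
  rw [sum_mul_norm_sub_sq_eq_add hw y u]
  ring

theorem ballLagrangian_lineMap_single [DecidableEq ι] (w : ι → ℝ) (j : ι) (t : ℝ) (u : E) :
    ballLagrangian y r ((1 - t) • w + t • Pi.single j 1) u
      = (1 - t) * ballLagrangian y r w u + t * (‖u - y j‖ ^ 2 - r j) := by
  simp [ballLagrangian, add_mul, Finset.sum_add_distrib, Finset.mul_sum, mul_assoc,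
    Pi.single_apply]

theorem sub_le_ballLagrangian_of_isMaxOn [InnerProductSpace ℝ E] {w : ι → ℝ}
    (hw : w ∈ stdSimplex ℝ ι)
    (hmax : IsMaxOn (fun v ↦ ballLagrangian y r v (∑ k, v k • y k)) (stdSimplex ℝ ι) w)
    (j : ι) :
    ‖∑ k, w k • y k - y j‖ ^ 2 - r j ≤ ballLagrangian y r w (∑ k, w k • y k) := by
  classical
  set c : (ι → ℝ) → E := fun v ↦ ∑ k, v k • y k
  set v : ℝ → ι → ℝ := fun t ↦ (1 - t) • w + t • Pi.single j 1
  have hbound : ∀ t ∈ Set.Ioo (0 : ℝ) 1,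
      ‖c (v t) - y j‖ ^ 2 - r j ≤ ballLagrangian y r w (c w) := by
    intro t ⟨ht₀, ht₁⟩
    have hvt : v t ∈ stdSimplex ℝ ι := convex_stdSimplex ℝ ι hw (single_mem_stdSimplex ℝ j)
      (sub_nonneg.2 ht₁.le) ht₀.le (sub_add_cancel 1 t)
    have hlower : (1 - t) * ballLagrangian y r w (c w) + t * (‖c (v t) - y j‖ ^ 2 - r j)
        ≤ ballLagrangian y r (v t) (c (v t)) := by
      rw [ballLagrangian_lineMap_single, ballLagrangian_eq_add y r hw.2 (c (v t))]
      nlinarith [sq_nonneg ‖c (v t) - c w‖]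
    have hmaxt : ballLagrangian y r (v t) (c (v t)) ≤ ballLagrangian y r w (c w) := hmax hvt
    nlinarith
  have hv₀ : v 0 = w := by simp [v]
  have hcont : Continuous fun t ↦ ‖c (v t) - y j‖ ^ 2 - r j := by fun_prop
  have hlim := (hcont.tendsto 0).mono_left (nhdsWithin_le_nhds (s := Set.Ioi 0))
  rw [hv₀] at hlim
  exact le_of_tendsto hlim (Filter.eventually_of_mem (Ioo_mem_nhdsGT one_pos) hbound)

end BallLagrangian

theorem exists_forall_norm_sub_le_norm_sub_of_fintype {E : Type*} [NormedAddCommGroup E]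
    [InnerProductSpace ℝ E] {ι : Type*} [Fintype ι] {x y : ι → E}
    (hxy : ∀ i j, ‖y i - y j‖ ≤ ‖x i - x j‖) (z : E) :
    ∃ u, ∀ i, ‖u - y i‖ ≤ ‖z - x i‖ := by
  classical
  rcases isEmpty_or_nonempty ι with hι | hι
  · exact ⟨0, isEmptyElim⟩
  set r : ι → ℝ := fun i ↦ ‖z - x i‖ ^ 2
  have hcont : Continuous fun v : ι → ℝ ↦ ballLagrangian y r v (∑ k, v k • y k) := by
    unfold ballLagrangian; fun_prop
  obtain ⟨w, hw, hmax⟩ := (isCompact_stdSimplex ℝ ι).exists_isMaxOn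
    ⟨_, single_mem_stdSimplex ℝ (Classical.arbitrary ι)⟩ hcont.continuousOn
  have hnonpos : ballLagrangian y r w (∑ k, w k • y k) ≤ 0 := by
    simp only [ballLagrangian, mul_sub, Finset.sum_sub_distrib, sub_nonpos]
    exact sum_mul_norm_sum_smul_sub_sq_le hxy hw.1 hw.2 z
  refine ⟨∑ k, w k • y k, fun j ↦ ?_⟩
  have hj := sub_le_ballLagrangian_of_isMaxOn y r hw hmax j
  exact (sq_le_sq₀ (norm_nonneg _) (norm_nonneg _)).1 (by linarith)

theorem exists_mem_forall_norm_le {K : Set H} (hne : K.Nonempty) (hcl : IsClosed K)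
    (hcv : Convex ℝ K) : ∃ v ∈ K, ∀ w ∈ K, ‖v‖ ≤ ‖w‖ := by
  obtain ⟨v, hv, heq⟩ := exists_norm_eq_iInf_of_complete_convex hne hcl.isComplete hcv 0
  refine ⟨v, hv, fun w hw ↦ ?_⟩
  have hle : ‖0 - v‖ ≤ ‖0 - w‖ := by
    rw [heq]
    exact ciInf_le ⟨0, Set.forall_mem_range.2 fun _ ↦ norm_nonneg _⟩ (⟨w, hw⟩ : K)
  simpa using hle

/-- Weak compactness in disguise: the minimal-norm points of the sets form a Cauchy net. -/
theorem nonempty_iInter_of_antitone {β : Type*} [SemilatticeSup β] [Nonempty β]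
    {S : β → Set H} (hS : Antitone S) (hne : ∀ b, (S b).Nonempty) (hcl : ∀ b, IsClosed (S b))
    (hcv : ∀ b, Convex ℝ (S b)) {b₀ : β} (hb₀ : Bornology.IsBounded (S b₀)) :
    (⋂ b, S b).Nonempty := by
  choose x hxS hxmin using fun b ↦ exists_mem_forall_norm_le (hne b) (hcl b) (hcv b)
  have hmono : Monotone fun b ↦ ‖x b‖ ^ 2 := fun b b' h ↦
    pow_le_pow_left₀ (norm_nonneg _) (hxmin b _ (hS h (hxS b'))) 2
  obtain ⟨R, hR⟩ := hb₀.exists_norm_le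
  have hbdd : BddAbove (Set.range fun b ↦ ‖x b‖ ^ 2) := by
    refine ⟨R ^ 2, ?_⟩
    rintro _ ⟨b, rfl⟩
    have hle : ‖x b‖ ≤ R :=
      (hxmin b _ (hS le_sup_left (hxS (b ⊔ b₀)))).trans (hR _ (hS le_sup_right (hxS _)))
    exact pow_le_pow_left₀ (norm_nonneg _) hle 2
  -- the midpoint of `x b` and `x b'` lies in `S b`, so the parallelogram law bounds their distance
  have hdist : ∀ b b', b ≤ b' → ‖x b' - x b‖ ^ 2 ≤ 2 * (‖x b'‖ ^ 2 - ‖x b‖ ^ 2) := by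
    intro b b' h
    have hmid : (2⁻¹ : ℝ) • (x b + x b') ∈ S b := by
      rw [smul_add]
      exact hcv b (hxS b) (hS h (hxS b')) (by norm_num) (by norm_num) (by norm_num)
    have hle := hxmin b _ hmid
    rw [norm_smul, Real.norm_of_nonneg (by norm_num)] at hle
    have hpar := parallelogram_law_with_norm ℝ (x b') (x b)
    rw [add_comm (x b')] at hpar
    nlinarith [norm_nonneg (x b)]
  have hcauchy : CauchySeq x := by
    have hN := (tendsto_atTop_ciSup hmono hbdd).cauchySeq
    rw [Metric.cauchySeq_iff'] at hN ⊢
    intro ε hε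
    obtain ⟨b, hb⟩ := hN (ε ^ 2 / 2) (by positivity)
    refine ⟨b, fun b' hb' ↦ ?_⟩
    have hN' := (abs_lt.1 (Real.dist_eq _ _ ▸ hb b' hb')).2
    rw [dist_eq_norm]
    exact lt_of_pow_lt_pow_left₀ 2 hε.le (by linarith [hdist b b' hb'])
  obtain ⟨u, hu⟩ := cauchySeq_tendsto_of_complete hcauchy
  exact ⟨u, Set.mem_iInter.2 fun b ↦ (hcl b).mem_of_tendsto hu
    (Filter.eventually_atTop.2 ⟨b, fun b' h ↦ hS h (hxS b')⟩)⟩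

/-- The one-point case of the Kirszbraun–Valentine extension theorem. -/
theorem exists_forall_norm_sub_le_norm_sub {ι : Type*} {x y : ι → H}
    (hxy : ∀ i j, ‖y i - y j‖ ≤ ‖x i - x j‖) (z : H) :
    ∃ u, ∀ i, ‖u - y i‖ ≤ ‖z - x i‖ := by
  classical
  rcases isEmpty_or_nonempty ι with hι | ⟨⟨i₀⟩⟩
  · exact ⟨0, isEmptyElim⟩
  set S : Finset ι → Set H := fun F ↦ ⋂ i ∈ F, Metric.closedBall (y i) ‖z - x i‖
  have hne : ∀ F, (S F).Nonempty := by
    intro F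
    obtain ⟨u, hu⟩ := exists_forall_norm_sub_le_norm_sub_of_fintype
      (x := fun i : F ↦ x i) (y := fun i : F ↦ y i) (fun i j ↦ hxy i j) z
    exact ⟨u, Set.mem_iInter₂.2 fun i hi ↦ by simpa [dist_eq_norm] using hu ⟨i, hi⟩⟩
  obtain ⟨u, hu⟩ := nonempty_iInter_of_antitone (S := S)
    (fun F G h ↦ Set.biInter_mono (Finset.coe_subset.2 h) fun _ _ ↦ subset_rfl) hne
    (fun F ↦ isClosed_biInter fun i _ ↦ Metric.isClosed_closedBall)
    (fun F ↦ convex_iInter₂ fun i _ ↦ convex_closedBall _ _) (b₀ := {i₀})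
    (by simpa [S] using Metric.isBounded_closedBall)
  refine ⟨u, fun i ↦ ?_⟩
  simpa [S, dist_eq_norm] using Set.mem_iInter.1 hu {i}

namespace MonotoneGraph

variable {E : Type*} [NormedAddCommGroup E] [InnerProductSpace ℝ E] {A : Set (E × E)}

/-- The reflected resolvent `x + x* ↦ x - x*` of a monotone operator is nonexpansive. -/
theorem norm_sub_sub_le_norm_add_sub_add (hA : MonotoneGraph A) {a b : E × E} (ha : a ∈ A)
    (hb : b ∈ A) : ‖(a.1 - a.2) - (b.1 - b.2)‖ ≤ ‖(a.1 + a.2) - (b.1 + b.2)‖ := by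
  have hsub : (a.1 - a.2) - (b.1 - b.2) = (a.1 - b.1) - (a.2 - b.2) := by abel
  have hadd : (a.1 + a.2) - (b.1 + b.2) = (a.1 - b.1) + (a.2 - b.2) := by abel
  rw [hsub, hadd, ← sq_le_sq₀ (norm_nonneg _) (norm_nonneg _), norm_sub_sq_real,
    norm_add_sq_real]
  linarith [hA a ha b hb]

theorem maximallyMonotoneGraph_of_forall_exists_add_eq (hA : MonotoneGraph A)
    (hsurj : ∀ z : E, ∃ w ∈ A, w.1 + w.2 = z) : MaximallyMonotoneGraph A := by
  refine ⟨hA, fun ⟨x, u⟩ hxu ↦ ?_⟩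
  obtain ⟨⟨y, v⟩, hyv, hsum⟩ := hsurj (x + u)
  have huv : u - v = -(x - y) := by
    rw [← sub_eq_zero, show u - v - -(x - y) = (x + u) - (y + v) by abel, hsum, sub_self]
  have hinner := hxu (y, v) hyv
  simp only [huv, inner_neg_right, real_inner_self_eq_norm_sq, Left.nonneg_neg_iff] at hinner
  have hxy : x = y := sub_eq_zero.1 (norm_eq_zero.1 (pow_eq_zero_iff two_ne_zero |>.1
    (le_antisymm hinner (sq_nonneg _))))
  have huv' : u = v := by rwa [hxy, sub_self, neg_zero, sub_eq_zero] at huv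
  rwa [hxy, huv']

end MonotoneGraph

namespace MaximallyMonotoneGraph

variable {A : Set (H × H)}

theorem exists_add_eq (hA : MaximallyMonotoneGraph A) (z : H) : ∃ w ∈ A, w.1 + w.2 = z := by
  obtain ⟨u, hu⟩ := exists_forall_norm_sub_le_norm_sub
    (x := fun b : A ↦ b.1.1 + b.1.2) (y := fun b : A ↦ b.1.1 - b.1.2)
    (fun b c ↦ hA.1.norm_sub_sub_le_norm_add_sub_add b.2 c.2) z
  refine ⟨((2⁻¹ : ℝ) • (z + u), (2⁻¹ : ℝ) • (z - u)), hA.2 _ fun b hb ↦ ?_, by module⟩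
  set P := z - (b.1 + b.2)
  set Q := u - (b.1 - b.2)
  have hfst : (2⁻¹ : ℝ) • (z + u) - b.1 = (2⁻¹ : ℝ) • (P + Q) := by simp only [P, Q]; module
  have hsnd : (2⁻¹ : ℝ) • (z - u) - b.2 = (2⁻¹ : ℝ) • (P - Q) := by simp only [P, Q]; module
  have hPQ : ‖Q‖ ≤ ‖P‖ := hu ⟨b, hb⟩
  simp only [hfst, hsnd, real_inner_smul_left, real_inner_smul_right, inner_add_left,
    inner_sub_right, real_inner_self_eq_norm_sq, real_inner_comm Q P]
  nlinarith [norm_nonneg Q]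

end MaximallyMonotoneGraph

/-- Minty's theorem: a monotone operator `A` on a Hilbert space is maximally monotone
if and only if `ran (A + Id) = H`. -/
theorem minty_surjectivity (A : Set (H × H)) (hA : MonotoneGraph A) :
    MaximallyMonotoneGraph A ↔ ∀ z : H, ∃ w ∈ A, w.1 + w.2 = z :=
  ⟨MaximallyMonotoneGraph.exists_add_eq, hA.maximallyMonotoneGraph_of_forall_exists_add_eq⟩
end
end

section
/- (Moreau decomposition) Let f : H → ℝ∪{+∞} be a proper lower semicontinuous convex function on a real Hilbert space H. Then for every x ∈ H, x = prox_f(x) + prox_{f*}(x). -/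
noncomputable section
open scoped RealInnerProductSpace

variable {H : Type*} [NormedAddCommGroup H] [InnerProductSpace ℝ H] [CompleteSpace H]

/-- Convexity for extended-real-valued functions. -/
def ERealConvexOn (f : H → EReal) : Prop :=
  ∀ x y : H, ∀ a b : ℝ, 0 ≤ a → 0 ≤ b → a + b = 1 →
    f (a • x + b • y) ≤ (a : EReal) * f x + (b : EReal) * f y

/-- `u` is the proximal point of `f` at `x`: it minimizes `y ↦ f(y) + ‖x − y‖²/2`. -/
def IsProx (f : H → EReal) (x u : H) : Prop :=
  ∀ y : H, f u + ((‖x - u‖ ^ 2 / 2 : ℝ) : EReal) ≤ f y + ((‖x - y‖ ^ 2 / 2 : ℝ) : EReal)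

/-- The Fenchel conjugate of `f`, identified as a function on `H` via the Riesz
isomorphism: `f*(v) = sup_y (⟪v, y⟫ − f(y))`. -/
def rieszConj (f : H → EReal) (v : H) : EReal :=
  ⨆ y : H, ((⟪v, y⟫ : EReal) - f y)

/-!
The objective `y ↦ f y + ‖x - y‖² / 2` is bounded below, since separating a point below the
closed convex epigraph of `f` yields a continuous affine minorant, and it is strongly convex, so
by Apollonius' identity its minimizing sequences are Cauchy; by lower semicontinuity their limit
`u` is `prox_f x`. Comparing `u` with the points `(1 - t) u + t z` and letting `t → 0` gives the
subgradient inequality `f z ≥ f u + ⟪x - u, z - u⟫`, hence `f* (x - u) ≤ ⟪x - u, u⟫ - f u`.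
With the Fenchel–Young inequality `f* w ≥ ⟪w, u⟫ - f u` this shows that `x - u` minimizes
`w ↦ f* w + ‖x - w‖² / 2`: the lower bound at `w` exceeds the upper bound at `x - u` by
`‖x - w - u‖² / 2`.
-/

open Filter Topology

theorem le_of_forall_le_add_mul {a b c : ℝ} (h : ∀ t : ℝ, 0 < t → t ≤ 1 → a ≤ b + t * c) :
    a ≤ b := by
  have hlim : Tendsto (fun t : ℝ => b + t * c) (𝓝[>] 0) (𝓝 b) := by
    have : Tendsto (fun t : ℝ => b + t * c) (𝓝 0) (𝓝 (b + 0 * c)) :=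
      tendsto_const_nhds.add (tendsto_id.mul_const c)
    simpa using tendsto_nhdsWithin_of_tendsto_nhds this
  refine ge_of_tendsto hlim ?_
  filter_upwards [Ioc_mem_nhdsGT one_pos] with t ht using h t ht.1 ht.2

theorem ContinuousLinearMap.sub_norm_sq_div_two_le {E : Type*} [NormedAddCommGroup E]
    [NormedSpace ℝ E] (g : E →L[ℝ] ℝ) (x y : E) :
    g x - ‖g‖ ^ 2 / 2 ≤ g y + ‖x - y‖ ^ 2 / 2 := by
  have h : g (x - y) ≤ ‖g‖ * ‖x - y‖ := (le_abs_self _).trans (g.le_opNorm _)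
  rw [map_sub] at h
  nlinarith [sq_nonneg (‖x - y‖ - ‖g‖)]

theorem LowerSemicontinuous.exists_le_of_forall_dist_lt {X : Type*} [PseudoMetricSpace X]
    [CompleteSpace X] {φ : X → EReal} (hφ : LowerSemicontinuous φ) {m : ℝ}
    (hne : ∀ ε > 0, ∃ y, φ y ≤ ↑(m + ε))
    (hwp : ∀ ε > 0, ∃ δ > 0, ∀ a b, φ a ≤ ↑(m + δ) → φ b ≤ ↑(m + δ) → dist a b < ε) :
    ∃ u, φ u ≤ m := by
  choose y hy using fun n : ℕ => hne (1 / (n + 1)) Nat.one_div_pos_of_nat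
  have hsublevel : ∀ {δ : ℝ}, 0 < δ → ∀ᶠ n in atTop, φ (y n) ≤ ↑(m + δ) := fun hδ => by
    filter_upwards [tendsto_one_div_add_atTop_nhds_zero_nat.eventually (eventually_le_nhds hδ)]
      with n hn
    exact (hy n).trans (EReal.coe_le_coe_iff.2 (by linarith))
  have hcauchy : CauchySeq y := by
    refine Metric.cauchySeq_iff'.2 fun ε hε => ?_
    obtain ⟨δ, hδ, hdist⟩ := hwp ε hε
    obtain ⟨N, hN⟩ := eventually_atTop.1 (hsublevel hδ)
    exact ⟨N, fun n hn => hdist _ _ (hN n hn) (hN N le_rfl)⟩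
  obtain ⟨u, hu⟩ := cauchySeq_tendsto_of_complete hcauchy
  refine ⟨u, EReal.le_of_forall_lt_iff_le.1 fun z hz => ?_⟩
  have hδ : 0 < z - m := sub_pos.2 (EReal.coe_lt_coe_iff.1 hz)
  simpa using (hφ.isClosed_preimage _).mem_of_tendsto hu (hsublevel hδ)

theorem exists_continuousLinearMap_add_const_le {F : Type*} [TopologicalSpace F]
    [AddCommGroup F] [Module ℝ F] [IsTopologicalAddGroup F] [ContinuousSMul ℝ F]
    [LocallyConvexSpace ℝ F] {f : F → EReal} (hconv : Convex ℝ {p : F × ℝ | f p.1 ≤ p.2})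
    (hclosed : IsClosed {p : F × ℝ | f p.1 ≤ p.2}) {x₀ : F} {r₀ : ℝ} (hx₀ : f x₀ = r₀) :
    ∃ (g : F →L[ℝ] ℝ) (β : ℝ), ∀ y, ((g y + β : ℝ) : EReal) ≤ f y := by
  obtain ⟨L, α, hLx₀, hL⟩ := geometric_hahn_banach_point_closed hconv hclosed
    (x := (x₀, r₀ - 1)) (by simpa [hx₀] using EReal.coe_lt_coe_iff.2 (sub_one_lt r₀))
  have hsplit : ∀ y s, L (y, s) = L (y, 0) + s * L (0, 1) := fun y s => by
    rw [← smul_eq_mul, ← map_smul, ← map_add]; simp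
  -- `L` strictly separates `(x₀, r₀ - 1)` from `(x₀, r₀)`, so its level sets are not vertical
  -- and `L = α` is the graph of an affine minorant.
  have hc : 0 < L (0, 1) := by
    have := hL (x₀, r₀) (by simp [hx₀])
    rw [hsplit] at this hLx₀
    linarith
  refine ⟨-(L (0, 1))⁻¹ • L.comp (ContinuousLinearMap.inl ℝ F ℝ), α / L (0, 1),
    fun y => EReal.le_of_forall_lt_iff_le.1 fun s hs => EReal.coe_le_coe_iff.2 ?_⟩
  have hs' := hL (y, s) hs.le
  rw [hsplit] at hs'
  have : (α - L (y, 0)) / L (0, 1) < s := (div_lt_iff₀ hc).2 (by linarith)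
  simp only [smul_apply, ContinuousLinearMap.comp_apply,
    ContinuousLinearMap.inl_apply, smul_eq_mul]
  linarith [show (α - L (y, 0)) / L (0, 1) = -(L (0, 1))⁻¹ * L (y, 0) + α / L (0, 1) by ring]

theorem LowerSemicontinuous.isClosed_realEpigraph {X : Type*} [TopologicalSpace X]
    {f : X → EReal} (hf : LowerSemicontinuous f) : IsClosed {p : X × ℝ | f p.1 ≤ p.2} :=
  hf.isClosed_epigraph.preimage
    (continuous_fst.prodMk (continuous_coe_real_ereal.comp continuous_snd))

section ConvexAnalysis

variable {E : Type*} [NormedAddCommGroup E] {f : E → EReal}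

def proxObjective (f : E → EReal) (x y : E) : EReal :=
  f y + ((‖x - y‖ ^ 2 / 2 : ℝ) : EReal)

theorem LowerSemicontinuous.proxObjective (hf : LowerSemicontinuous f) (x : E) :
    LowerSemicontinuous (proxObjective f x) :=
  hf.add' (continuous_coe_real_ereal.comp (by fun_prop)).lowerSemicontinuous
    fun _ => EReal.continuousAt_add (.inr (EReal.coe_ne_bot _)) (.inr (EReal.coe_ne_top _))

theorem IsProx.ne_top {x u y : E} (hu : IsProx f x u) (hy : f y ≠ ⊤) : f u ≠ ⊤ := by
  intro htop
  have := hu y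
  rw [htop, EReal.top_add_coe, top_le_iff] at this
  exact EReal.add_ne_top hy (EReal.coe_ne_top _) this

theorem IsProx.le_of_le_coe {x u : E} (hu : IsProx f x u) {r : ℝ} (hr : f u = r) {y : E}
    {s : ℝ} (hy : f y ≤ s) : r + ‖x - u‖ ^ 2 / 2 ≤ s + ‖x - y‖ ^ 2 / 2 := by
  have := (hu y).trans (add_le_add_left hy _)
  rw [hr] at this
  exact_mod_cast this

variable [InnerProductSpace ℝ E]

theorem ERealConvexOn.convex_epigraph (hf : ERealConvexOn f) :
    Convex ℝ {p : E × ℝ | f p.1 ≤ p.2} := by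
  rintro ⟨y, s⟩ hy ⟨z, t⟩ hz a b ha hb hab
  show f (a • y + b • z) ≤ ((a * s + b * t : ℝ) : EReal)
  calc f (a • y + b • z) ≤ a * f y + b * f z := hf y z a b ha hb hab
    _ ≤ a * s + b * t := add_le_add (mul_le_mul_of_nonneg_left hy (EReal.coe_nonneg.2 ha))
        (mul_le_mul_of_nonneg_left hz (EReal.coe_nonneg.2 hb))
    _ = ((a * s + b * t : ℝ) : EReal) := by norm_cast

theorem ERealConvexOn.le_midpoint (hf : ERealConvexOn f) {a b : E} {s t : ℝ}
    (ha : f a ≤ s) (hb : f b ≤ t) : f (midpoint ℝ a b) ≤ ((s + t) / 2 : ℝ) := by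
  have := hf.convex_epigraph (x := (a, s)) (y := (b, t)) ha hb (a := 1 / 2) (b := 1 / 2)
    (by norm_num) (by norm_num) (by norm_num)
  rw [midpoint_eq_smul_add, smul_add, invOf_eq_inv, ← one_div,
    show (s + t) / 2 = 1 / 2 * s + 1 / 2 * t by ring]
  exact this

theorem ERealConvexOn.sq_norm_sub_le_of_proxObjective_le (hf : ERealConvexOn f) {x : E}
    {m δ : ℝ} (hm : ∀ y, (m : EReal) ≤ proxObjective f x y) {a b : E}
    (ha : proxObjective f x a ≤ ↑(m + δ)) (hb : proxObjective f x b ≤ ↑(m + δ)) :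
    ‖a - b‖ ^ 2 ≤ 8 * δ := by
  have hf_le : ∀ {y : E}, proxObjective f x y ≤ ↑(m + δ) →
      f y ≤ ((m + δ - ‖x - y‖ ^ 2 / 2 : ℝ) : EReal) := fun h => by
    rw [EReal.coe_sub]
    exact (EReal.le_sub_iff_add_le (.inl (EReal.coe_ne_bot _)) (.inl (EReal.coe_ne_top _))).2 h
  have hmid : m ≤ (m + δ - ‖x - a‖ ^ 2 / 2 + (m + δ - ‖x - b‖ ^ 2 / 2)) / 2
      + ‖x - midpoint ℝ a b‖ ^ 2 / 2 := by
    exact_mod_cast (hm _).trans (add_le_add_left (hf.le_midpoint (hf_le ha) (hf_le hb)) _)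
  have hapollonius :=
    EuclideanGeometry.dist_sq_add_dist_sq_eq_two_mul_dist_midpoint_sq_add_half_dist_sq x a b
  simp only [dist_eq_norm] at hapollonius
  linarith

theorem ERealConvexOn.exists_isProx [CompleteSpace E] (hconv : ERealConvexOn f)
    (hlsc : LowerSemicontinuous f) {x₀ : E} {r₀ : ℝ} (hx₀ : f x₀ = r₀) (x : E) :
    ∃ u, IsProx f x u := by
  obtain ⟨g, β, hg⟩ := exists_continuousLinearMap_add_const_le hconv.convex_epigraph
    hlsc.isClosed_realEpigraph hx₀
  have hC : ∀ y, ((g x - ‖g‖ ^ 2 / 2 + β : ℝ) : EReal) ≤ proxObjective f x y := fun y =>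
    calc ((g x - ‖g‖ ^ 2 / 2 + β : ℝ) : EReal)
        ≤ ((g y + β + ‖x - y‖ ^ 2 / 2 : ℝ) : EReal) :=
          EReal.coe_le_coe_iff.2 (by linarith [g.sub_norm_sq_div_two_le x y])
      _ = ((g y + β : ℝ) : EReal) + ((‖x - y‖ ^ 2 / 2 : ℝ) : EReal) := by norm_cast
      _ ≤ proxObjective f x y := add_le_add_left (hg y) _
  have hx₀' : proxObjective f x x₀ = ((r₀ + ‖x - x₀‖ ^ 2 / 2 : ℝ) : EReal) := by
    rw [proxObjective, hx₀]; norm_cast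
  obtain ⟨m, hm⟩ : ∃ m : ℝ, ⨅ y, proxObjective f x y = m :=
    ⟨_, (EReal.coe_toReal (ne_top_of_le_ne_top (hx₀' ▸ EReal.coe_ne_top _) (iInf_le _ x₀))
      (ne_bot_of_le_ne_bot (EReal.coe_ne_bot _) (le_iInf hC))).symm⟩
  have hlow : ∀ y, (m : EReal) ≤ proxObjective f x y := fun y => hm ▸ iInf_le _ y
  have hne : ∀ ε > 0, ∃ y, proxObjective f x y ≤ ↑(m + ε) := fun ε hε => by
    obtain ⟨y, hy⟩ := iInf_lt_iff.1 (hm ▸ EReal.coe_lt_coe_iff.2 (lt_add_of_pos_right m hε))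
    exact ⟨y, hy.le⟩
  have hwp : ∀ ε > 0, ∃ δ > 0, ∀ a b, proxObjective f x a ≤ ↑(m + δ) →
      proxObjective f x b ≤ ↑(m + δ) → dist a b < ε := fun ε hε =>
    ⟨ε ^ 2 / 16, by positivity, fun a b ha hb => by
      have := hconv.sq_norm_sub_le_of_proxObjective_le hlow ha hb
      rw [dist_eq_norm]
      exact lt_of_pow_lt_pow_left₀ 2 hε.le (by linarith [pow_pos hε 2])⟩
  obtain ⟨u, hu⟩ := (hlsc.proxObjective x).exists_le_of_forall_dist_lt hne hwp
  exact ⟨u, fun y => hu.trans (hlow y)⟩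

theorem IsProx.add_inner_le (hf : ERealConvexOn f) {x u : E} (hu : IsProx f x u) {r : ℝ}
    (hr : f u = r) {z : E} {s : ℝ} (hz : f z ≤ s) : r + ⟪x - u, z - u⟫ ≤ s := by
  refine le_of_forall_le_add_mul (c := ‖z - u‖ ^ 2 / 2) fun t ht ht1 => ?_
  have hp := hf.convex_epigraph (x := (u, r)) (y := (z, s)) (show f u ≤ r from hr.le) hz
    (sub_nonneg.2 ht1) ht.le (sub_add_cancel 1 t)
  have key := hu.le_of_le_coe hr hp
  have hexp : ‖x - ((1 - t) • u + t • z)‖ ^ 2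
      = ‖x - u‖ ^ 2 - 2 * t * ⟪x - u, z - u⟫ + t ^ 2 * ‖z - u‖ ^ 2 := by
    rw [show x - ((1 - t) • u + t • z) = (x - u) - t • (z - u) by module, norm_sub_sq_real,
      inner_smul_right, norm_smul, mul_pow, Real.norm_eq_abs, sq_abs]
    ring
  simp only [Prod.fst_add, Prod.snd_add, Prod.smul_fst, Prod.smul_snd, smul_eq_mul] at key
  rw [hexp] at key
  have : t * (r + ⟪x - u, z - u⟫) ≤ t * (s + t * (‖z - u‖ ^ 2 / 2)) := by linarith
  exact le_of_mul_le_mul_left this ht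

theorem inner_sub_le_rieszConj (f : E → EReal) (v y : E) :
    (⟪v, y⟫ : EReal) - f y ≤ rieszConj f v :=
  le_iSup (fun y => (⟪v, y⟫ : EReal) - f y) y

theorem IsProx.rieszConj_sub_le (hf : ERealConvexOn f) {x u : E} (hu : IsProx f x u) {r : ℝ}
    (hr : f u = r) : rieszConj f (x - u) ≤ ((⟪x - u, u⟫ - r : ℝ) : EReal) := by
  refine iSup_le fun z => (EReal.sub_le_iff_le_add (.inr (EReal.coe_ne_top _))
    (.inr (EReal.coe_ne_bot _))).2 ?_
  have hz : ((r + ⟪x - u, z - u⟫ : ℝ) : EReal) ≤ f z :=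
    EReal.le_of_forall_lt_iff_le.1 fun s hs =>
      EReal.coe_le_coe_iff.2 (hu.add_inner_le hf hr hs.le)
  calc (⟪x - u, z⟫ : EReal)
      = ((⟪x - u, u⟫ - r : ℝ) : EReal) + ((r + ⟪x - u, z - u⟫ : ℝ) : EReal) := by
        rw [inner_sub_right]; norm_cast; ring
    _ ≤ _ := add_le_add_right hz _

theorem IsProx.isProx_rieszConj_sub (hf : ERealConvexOn f) {x u : E} (hu : IsProx f x u)
    {r : ℝ} (hr : f u = r) : IsProx (rieszConj f) x (x - u) := by
  intro w
  have hw : ((⟪w, u⟫ - r : ℝ) : EReal) ≤ rieszConj f w := by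
    simpa [hr] using inner_sub_le_rieszConj f w u
  have hreal : ⟪x - u, u⟫ - r + ‖u‖ ^ 2 / 2 ≤ ⟪w, u⟫ - r + ‖x - w‖ ^ 2 / 2 := by
    have hsq := norm_sub_sq_real (x - w) u
    have hinner : ⟪x - u, u⟫ = ⟪x - w, u⟫ + ⟪w, u⟫ - ‖u‖ ^ 2 := by
      rw [inner_sub_left, inner_sub_left, real_inner_self_eq_norm_sq]; ring
    linarith [sq_nonneg ‖x - w - u‖]
  rw [sub_sub_cancel]
  calc rieszConj f (x - u) + ((‖u‖ ^ 2 / 2 : ℝ) : EReal)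
      ≤ ((⟪x - u, u⟫ - r : ℝ) : EReal) + ((‖u‖ ^ 2 / 2 : ℝ) : EReal) :=
        add_le_add_left (hu.rieszConj_sub_le hf hr) _
    _ ≤ ((⟪w, u⟫ - r : ℝ) : EReal) + ((‖x - w‖ ^ 2 / 2 : ℝ) : EReal) := by exact_mod_cast hreal
    _ ≤ _ := add_le_add_left hw _

end ConvexAnalysis

/-- Moreau decomposition: for a proper lower semicontinuous convex function `f` on a
Hilbert space, `x = prox_f(x) + prox_{f*}(x)` for every `x`. -/
theorem moreau_decomposition (f : H → EReal) (hbot : ∀ x, f x ≠ ⊥)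
    (hproper : ∃ x, f x ≠ ⊤) (hconv : ERealConvexOn f) (hlsc : LowerSemicontinuous f) :
    ∀ x : H, ∃ u v : H, IsProx f x u ∧ IsProx (rieszConj f) x v ∧ u + v = x := by
  intro x
  obtain ⟨x₀, hx₀⟩ := hproper
  obtain ⟨u, hu⟩ := hconv.exists_isProx hlsc (EReal.coe_toReal hx₀ (hbot x₀)).symm x
  have hr : f u = ((f u).toReal : EReal) := (EReal.coe_toReal (hu.ne_top hx₀) (hbot u)).symm
  exact ⟨u, x - u, hu, hu.isProx_rieszConj_sub hconv hr, add_sub_cancel u x⟩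
end
end
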